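/- For every orientation L ∈ O_f, the composite map ψ := ψ_{e_1} ∘ ⋯ ∘ ψ_{e_m} satisfies: ψ(L) is a subgraph of G admitting a d-flow (so ψ maps O_f into S_f) and A(ψ(L)) = A(L). -/

import Mathlib

open Finset

section Defs

variable {V : Type*}

/-- Reversal of a directed edge. -/
def drev (e : V × V) : V × V := (e.2, e.1)

/-- `K` is a subgraph of the (symmetric) edge set `E`: it contains either both or
neither of `e` and `drev e` for every `e ∈ E`. -/
def IsSubgraph [DecidableEq V] (E K : Finset (V × V)) : Prop :=
  K ⊆ E ∧ ∀ e ∈ E, (e ∈ K ↔ drev e ∈ K)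

/-- `L` is an orientation of the (symmetric) edge set `E`: it contains exactly one of
`e` and `drev e` for every `e ∈ E`. -/
def IsOrientation [DecidableEq V] (E L : Finset (V × V)) : Prop :=
  L ⊆ E ∧ ∀ e ∈ E, (e ∈ L ↔ drev e ∉ L)

variable [Fintype V] [DecidableEq V]

/-- `f` is a `d`-flow on the directed subgraph `D` of the graph with edge set `E`. -/
def IsFlow (E D : Finset (V × V)) (d : V → ℤ) (f : V × V → ℝ) : Prop :=
  (∀ e ∈ E, 0 ≤ f e ∧ f e ≤ 1) ∧
  (∀ e, e ∉ D → f e = 0) ∧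
  ∀ u : V,
    ((Finset.univ.filter (fun v : V => (u, v) ∈ E)).sum fun v => f (u, v)) -
      ((Finset.univ.filter (fun v : V => (v, u) ∈ E)).sum fun v => f (v, u)) = (d u : ℝ)

/-- A `d`-flow exists on `D`. -/
def AdmitsFlow (E D : Finset (V × V)) (d : V → ℤ) : Prop :=
  ∃ f : V × V → ℝ, IsFlow E D d f

/-- The `w`-cost of a flow `f`. -/
def flowCost (E : Finset (V × V)) (w : V × V → ℝ) (f : V × V → ℝ) : ℝ :=
  ∑ e ∈ E, w e * f e

/-- `f` is a min-cost `d`-flow on `D`. -/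
def IsMinCostFlow (E D : Finset (V × V)) (d : V → ℤ) (w : V × V → ℝ)
    (f : V × V → ℝ) : Prop :=
  IsFlow E D d f ∧ ∀ g : V × V → ℝ, IsFlow E D d g → flowCost E w f ≤ flowCost E w g

/-- The `{0,1}`-valued function determined by a set of edges. -/
def ind (S : Finset (V × V)) : V × V → ℝ := fun e => if e ∈ S then 1 else 0

/-- `A` assigns to every flow-admitting `D ⊆ E` the (edge set of the) unique,
`{0,1}`-valued min-cost `d`-flow on `D`. -/
def GoodA (E : Finset (V × V)) (d : V → ℤ) (w : V × V → ℝ)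
    (A : Finset (V × V) → Finset (V × V)) : Prop :=
  ∀ D : Finset (V × V), D ⊆ E → AdmitsFlow E D d →
    IsMinCostFlow E D d w (ind (A D)) ∧
    ∀ f : V × V → ℝ, IsMinCostFlow E D d w f → f = ind (A D)

/-- `A(D) = A(D')`: both `D` and `D'` admit a `d`-flow and their unique min-cost
`d`-flows coincide.  (If one of them admits no `d`-flow this is false.) -/
def AEq (E : Finset (V × V)) (d : V → ℤ) (A : Finset (V × V) → Finset (V × V))
    (D D' : Finset (V × V)) : Prop :=
  AdmitsFlow E D d ∧ AdmitsFlow E D' d ∧ A D = A D'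

/-- `D ⊕ e := (D ∪ {e}) \ {drev e}`. -/
def oplus (D : Finset (V × V)) (e : V × V) : Finset (V × V) := insert e D \ {drev e}

/-- `D + e := D ∪ {e, drev e}`. -/
def padd (D : Finset (V × V)) (e : V × V) : Finset (V × V) := D ∪ {e, drev e}

/-- `D − e := D \ {e, drev e}`. -/
def psub (D : Finset (V × V)) (e : V × V) : Finset (V × V) := D \ {e, drev e}

/-- The representative of `{e, drev e}` lying in the reference orientation `E'`. -/
def chi (E' : Finset (V × V)) (e : V × V) : V × V := if e ∈ E' then e else drev e

/-- The map `φ_e`. -/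
noncomputable def phiE (E : Finset (V × V)) (d : V → ℤ)
    (A : Finset (V × V) → Finset (V × V)) (E' : Finset (V × V))
    (e : V × V) (D : Finset (V × V)) : Finset (V × V) := by
  classical
  exact
    if ¬ AEq E d A D (oplus D e) then oplus D (drev e)
    else if ¬ AEq E d A D (oplus D (drev e)) then oplus D e
    else if e ∈ D then oplus D (chi E' e) else oplus D (drev (chi E' e))

/-- The map `ψ_e`. -/
noncomputable def psiE (E : Finset (V × V)) (d : V → ℤ)
    (A : Finset (V × V) → Finset (V × V)) (E' : Finset (V × V))
    (e : V × V) (D : Finset (V × V)) : Finset (V × V) := by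
  classical
  exact
    if ¬ AEq E d A D (padd D e) then psub D e
    else if ¬ AEq E d A D (psub D e) then padd D e
    else if chi E' e ∈ D then padd D e else psub D e

end Defs

/-!
Each `ψ_e` adds or removes the whole pair `{e, drev e}`. Hence the pair is balanced right after
`ψ_e`, and the maps applied later, whose edges come from the same orientation `E'`, never touch
it again: the result is a subgraph. Each `ψ_e` also keeps the optimum `A`. This is clear unless
`ψ_e` removes the pair because adding it changes `A`; but then the optimum on `D` uses neither
`e` nor `drev e`, since otherwise averaging it with the strictly cheaper optimum on `D + e` and
cancelling the resulting flow around the `2`-cycle `e, drev e` gives a cheaper flow on `D`.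
-/

section EdgeSets

variable {V : Type*}

@[simp] lemma drev_drev (e : V × V) : drev (drev e) = e := rfl

lemma drev_injective : Function.Injective (drev : V × V → V × V) :=
  Function.LeftInverse.injective drev_drev

lemma drev_eq_iff {x y : V × V} : drev x = y ↔ x = drev y :=
  ⟨fun h => h ▸ (drev_drev x).symm, fun h => h ▸ drev_drev y⟩

variable [DecidableEq V]

lemma ind_injective : Function.Injective (ind : Finset (V × V) → V × V → ℝ) := by
  intro S S' h
  ext x
  have hx := congrFun h x
  by_cases hS : x ∈ S <;> by_cases hS' : x ∈ S' <;> simp_all [ind]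

lemma padd_subset {E D : Finset (V × V)} {e : V × V} (hE : ∀ e, e ∈ E ↔ drev e ∈ E)
    (he : e ∈ E) (hD : D ⊆ E) : padd D e ⊆ E :=
  union_subset hD (by simp [insert_subset_iff, he, (hE e).1 he])

lemma mem_padd {D : Finset (V × V)} {e x : V × V} :
    x ∈ padd D e ↔ x ∈ D ∨ x = e ∨ x = drev e := by
  simp only [padd, mem_union, mem_insert, mem_singleton]

lemma mem_psub {D : Finset (V × V)} {e x : V × V} :
    x ∈ psub D e ↔ x ∈ D ∧ x ≠ e ∧ x ≠ drev e := by
  simp [psub, not_or]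

lemma padd_drev (D : Finset (V × V)) (e : V × V) : padd D (drev e) = padd D e := by
  ext x; simp only [mem_padd, drev_drev]; tauto

lemma mem_iff_of_eq_padd_or_psub {D D' : Finset (V × V)} {e x : V × V}
    (hD' : D' = padd D e ∨ D' = psub D e) (hxe : x ≠ e) (hxe' : x ≠ drev e) :
    x ∈ D' ↔ x ∈ D := by
  rcases hD' with rfl | rfl <;> simp [mem_padd, mem_psub, hxe, hxe']

lemma mem_iff_drev_mem_of_eq_padd_or_psub {D D' : Finset (V × V)} {e : V × V}
    (hD' : D' = padd D e ∨ D' = psub D e) : e ∈ D' ↔ drev e ∈ D' := by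
  rcases hD' with rfl | rfl <;> simp [mem_padd, mem_psub]

/-- `φ e` balances the pair `{e, drev e}`, and the maps applied after it leave that pair
alone because their edges are neither `e` nor `drev e`. -/
lemma mem_foldr_iff_drev_mem (φ : V × V → Finset (V × V) → Finset (V × V))
    (hφ : ∀ e D, φ e D = padd D e ∨ φ e D = psub D e) (D : Finset (V × V))
    {l : List (V × V)} (hl : l.Pairwise fun a b => a ≠ b ∧ a ≠ drev b) :
    ∀ e ∈ l, e ∈ l.foldr φ D ↔ drev e ∈ l.foldr φ D := by
  induction l with
  | nil => simp
  | cons a t ih =>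
    rw [List.pairwise_cons] at hl
    intro e he
    rcases List.mem_cons.1 he with rfl | he
    · exact mem_iff_drev_mem_of_eq_padd_or_psub (hφ _ _)
    · obtain ⟨hae, hae'⟩ := hl.1 e he
      have hea : drev e ≠ drev a := fun h => hae (drev_injective h).symm
      rw [List.foldr_cons, mem_iff_of_eq_padd_or_psub (hφ _ _) (Ne.symm hae)
        (fun h => hae' (by rw [h, drev_drev])),
        mem_iff_of_eq_padd_or_psub (hφ _ _) (fun h => hae' h.symm) hea]
      exact ih hl.2 e he

lemma IsOrientation.pairwise {E E' : Finset (V × V)} (hE' : IsOrientation E E')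
    {l : List (V × V)} (hnd : l.Nodup) (hl : ∀ e ∈ l, e ∈ E') :
    l.Pairwise fun a b => a ≠ b ∧ a ≠ drev b := by
  refine hnd.imp_of_mem fun ha hb hab => ⟨hab, fun h => ?_⟩
  have hb' := hl _ hb
  exact (hE'.2 _ (hE'.1 hb')).1 hb' (h ▸ hl _ ha)

lemma ind_pair_comp_drev (e : V × V) : ind {e, drev e} ∘ drev = ind {e, drev e} := by
  ext x
  simp only [Function.comp, ind, mem_insert, mem_singleton, drev_eq_iff,
    drev_injective.eq_iff, or_comm]

end EdgeSets

section Flows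

variable {V : Type*}

lemma flowCost_mono {E : Finset (V × V)} {w f g : V × V → ℝ} (hw : ∀ e ∈ E, 0 ≤ w e)
    (hfg : ∀ e ∈ E, f e ≤ g e) : flowCost E w f ≤ flowCost E w g :=
  sum_le_sum fun e he => mul_le_mul_of_nonneg_left (hfg e he) (hw e he)

lemma flowCost_midpoint (E : Finset (V × V)) (w f g : V × V → ℝ) :
    flowCost E w ((1 / 2 : ℝ) • (f + g)) = (flowCost E w f + flowCost E w g) / 2 := by
  simp only [flowCost, Pi.smul_apply, Pi.add_apply, smul_eq_mul, ← sum_add_distrib, sum_div]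
  exact sum_congr rfl fun _ _ => by ring

variable [Fintype V] [DecidableEq V]

def divergence (E : Finset (V × V)) (u : V) : (V × V → ℝ) →ₗ[ℝ] ℝ :=
  ∑ v ∈ univ.filter (fun v => (u, v) ∈ E), LinearMap.proj (u, v) -
    ∑ v ∈ univ.filter (fun v => (v, u) ∈ E), LinearMap.proj (v, u)

lemma isFlow_iff {E D : Finset (V × V)} {d : V → ℤ} {f : V × V → ℝ} :
    IsFlow E D d f ↔ (∀ e ∈ E, 0 ≤ f e ∧ f e ≤ 1) ∧ (∀ e, e ∉ D → f e = 0) ∧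
      ∀ u, divergence E u f = d u := by
  simp [IsFlow, divergence]

lemma IsFlow.mono {E D D' : Finset (V × V)} {d : V → ℤ} {f : V × V → ℝ}
    (hf : IsFlow E D d f) (hDD' : D ⊆ D') : IsFlow E D' d f :=
  ⟨hf.1, fun e he => hf.2.1 e fun h => he (hDD' h), hf.2.2⟩

lemma divergence_comp_drev {E : Finset (V × V)} (hE : ∀ e, e ∈ E ↔ drev e ∈ E)
    (g : V × V → ℝ) (u : V) : divergence E u (g ∘ drev) = -divergence E u g := by
  have hfilter : univ.filter (fun v => (u, v) ∈ E) = univ.filter (fun v => (v, u) ∈ E) := by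
    ext v
    simp only [mem_filter, mem_univ, true_and]
    exact hE (u, v)
  simp [divergence, hfilter, drev]

lemma divergence_eq_zero_of_comp_drev {E : Finset (V × V)} (hE : ∀ e, e ∈ E ↔ drev e ∈ E)
    {g : V × V → ℝ} (hg : g ∘ drev = g) (u : V) : divergence E u g = 0 := by
  have := divergence_comp_drev hE g u
  rw [hg] at this
  linarith

/-- Averaging `f` with a flow `g` that may also use `drev e` and cancelling the amount
`g (drev e)` that the average sends around the `2`-cycle `e, drev e` gives a flow on `D`. -/
lemma exists_isFlow_flowCost_le_midpoint {E D : Finset (V × V)} {d : V → ℤ}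
    {w f g : V × V → ℝ} {e : V × V} (hE : ∀ e, e ∈ E ↔ drev e ∈ E)
    (hw : ∀ e ∈ E, 0 ≤ w e) (he : e ∈ E) (heD : e ∈ D) (hf : IsFlow E D d f)
    (hfe : f e = 1) (hg : IsFlow E (padd D e) d g) :
    ∃ h, IsFlow E D d h ∧ flowCost E w h ≤ (flowCost E w f + flowCost E w g) / 2 := by
  rw [isFlow_iff] at hf hg
  set c := g (drev e)
  have hc : 0 ≤ c ∧ c ≤ 1 := hg.1 _ ((hE e).1 he)
  set h := (1 / 2 : ℝ) • (f + g - c • ind {e, drev e})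
  have h_apply (x) : h x = (f x + g x - c * ind {e, drev e} x) / 2 := by
    simp only [h, Pi.smul_apply, Pi.add_apply, Pi.sub_apply, smul_eq_mul]; ring
  have hcost : ∀ x ∈ E, h x ≤ ((1 / 2 : ℝ) • (f + g)) x := by
    intro x _
    have : 0 ≤ ind {e, drev e} x := by unfold ind; split_ifs <;> norm_num
    simp only [h_apply, Pi.smul_apply, Pi.add_apply, smul_eq_mul]
    nlinarith
  refine ⟨h, isFlow_iff.2 ⟨fun x hx => ?_, fun x hx => ?_, fun u => ?_⟩,
    (flowCost_mono hw hcost).trans (flowCost_midpoint E w f g).le⟩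
  · have hfx := hf.1 x hx
    have hgx := hg.1 x hx
    rw [h_apply]
    by_cases hxe : x = e
    · subst hxe; simp only [ind, mem_insert, true_or, if_true, hfe]; constructor <;> linarith
    by_cases hxe' : x = drev e
    · subst hxe'; simp only [ind, mem_insert, mem_singleton, or_true, if_true]
      constructor <;> linarith
    · simp only [ind, mem_insert, mem_singleton, hxe, hxe', or_self, if_false]
      constructor <;> linarith
  · have hfx := hf.2.1 x hx
    have hxe : x ≠ e := fun h => hx (h ▸ heD)
    rw [h_apply, hfx]
    by_cases hxe' : x = drev e
    · subst hxe'; simp [ind, c]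
    · have hgx := hg.2.1 x (by simp [mem_padd, hx, hxe, hxe'])
      simp [ind, hgx, hxe, hxe']
  · simp only [h, map_smul, map_sub, map_add, hf.2.2 u, hg.2.2 u,
      divergence_eq_zero_of_comp_drev hE (ind_pair_comp_drev e), smul_eq_mul]
    ring

lemma AEq.trans {E : Finset (V × V)} {d : V → ℤ} {A : Finset (V × V) → Finset (V × V)}
    {D D' D'' : Finset (V × V)} (h : AEq E d A D D') (h' : AEq E d A D' D'') :
    AEq E d A D D'' :=
  ⟨h.1, h'.2.1, h.2.2.trans h'.2.2⟩

lemma psiE_eq_padd_or_psub (E : Finset (V × V)) (d : V → ℤ)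
    (A : Finset (V × V) → Finset (V × V)) (E' : Finset (V × V)) (e : V × V)
    (D : Finset (V × V)) : psiE E d A E' e D = padd D e ∨ psiE E d A E' e D = psub D e := by
  unfold psiE
  split_ifs <;> simp

end Flows

namespace GoodA

variable {V : Type*} [Fintype V] [DecidableEq V] {E D D' : Finset (V × V)} {d : V → ℤ}
  {w : V × V → ℝ} {A : Finset (V × V) → Finset (V × V)}

lemma apply_subset (hA : GoodA E d w A) (hD : D ⊆ E) (hDf : AdmitsFlow E D d) : A D ⊆ D := by
  intro x hx
  by_contra hxD
  simpa [ind, hx] using (hA D hD hDf).1.1.2.1 x hxD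

lemma aeq_of_subset (hA : GoodA E d w A) (hD : D ⊆ E) (hDf : AdmitsFlow E D d)
    (hD'D : D' ⊆ D) (hAD' : A D ⊆ D') : AEq E d A D D' := by
  obtain ⟨hmin, -⟩ := hA D hD hDf
  have hflow : IsFlow E D' d (ind (A D)) :=
    ⟨hmin.1.1, fun x hx => by simp [ind, show x ∉ A D from fun h => hx (hAD' h)], hmin.1.2.2⟩
  have hmin' : IsMinCostFlow E D' d w (ind (A D)) :=
    ⟨hflow, fun g hg => hmin.2 g (hg.mono hD'D)⟩
  exact ⟨hDf, ⟨_, hflow⟩, ind_injective ((hA D' (hD'D.trans hD) ⟨_, hflow⟩).2 _ hmin')⟩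

/-- If `e ∈ A D`, the optimum on `padd D e` is strictly cheaper than the one on `D`, and the
flow of `exists_isFlow_flowCost_le_midpoint` built from the two would beat the latter. -/
lemma notMem_apply_of_not_aeq_padd (hA : GoodA E d w A) (hE : ∀ e, e ∈ E ↔ drev e ∈ E)
    (hw : ∀ e ∈ E, 0 ≤ w e) (hD : D ⊆ E) (hDf : AdmitsFlow E D d) {e : V × V} (he : e ∈ E)
    (hne : ¬ AEq E d A D (padd D e)) : e ∉ A D := by
  intro heA
  have hP : padd D e ⊆ E := padd_subset hE he hD
  obtain ⟨hminD, -⟩ := hA D hD hDf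
  obtain ⟨hminP, huniqP⟩ := hA (padd D e) hP ⟨_, hminD.1.mono subset_union_left⟩
  have hlt : flowCost E w (ind (A (padd D e))) < flowCost E w (ind (A D)) := by
    by_contra! hle
    refine hne ⟨hDf, ⟨_, hminP.1⟩, ind_injective (huniqP _ ⟨hminD.1.mono subset_union_left,
      fun g hg => hle.trans (hminP.2 g hg)⟩)⟩
  obtain ⟨h, hh, hcost⟩ := exists_isFlow_flowCost_le_midpoint hE hw he
    (hA.apply_subset hD hDf heA) hminD.1 (by simp [ind, heA]) hminP.1
  linarith [hminD.2 h hh]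

lemma aeq_psub_of_not_aeq_padd (hA : GoodA E d w A) (hE : ∀ e, e ∈ E ↔ drev e ∈ E)
    (hw : ∀ e ∈ E, 0 ≤ w e) (hD : D ⊆ E) (hDf : AdmitsFlow E D d) {e : V × V} (he : e ∈ E)
    (hne : ¬ AEq E d A D (padd D e)) : AEq E d A D (psub D e) := by
  refine hA.aeq_of_subset hD hDf sdiff_subset fun x hx => mem_psub.2 ⟨hA.apply_subset hD hDf hx,
    ?_, ?_⟩
  · rintro rfl
    exact hA.notMem_apply_of_not_aeq_padd hE hw hD hDf he hne hx
  · rintro rfl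
    exact hA.notMem_apply_of_not_aeq_padd hE hw hD hDf ((hE e).1 he) (padd_drev D e ▸ hne) hx

lemma aeq_psiE (hA : GoodA E d w A) (hE : ∀ e, e ∈ E ↔ drev e ∈ E) (hw : ∀ e ∈ E, 0 ≤ w e)
    (E' : Finset (V × V)) {e : V × V} (he : e ∈ E) (hD : D ⊆ E) (hDf : AdmitsFlow E D d) :
    psiE E d A E' e D ⊆ E ∧ AEq E d A D (psiE E d A E' e D) := by
  have hP : padd D e ⊆ E := padd_subset hE he hD
  have hS : psub D e ⊆ E := sdiff_subset.trans hD
  unfold psiE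
  split_ifs with hadd hsub
  · exact ⟨hP, hadd⟩
  · exact ⟨hS, hsub⟩
  · exact ⟨hP, hadd⟩
  · exact ⟨hS, hA.aeq_psub_of_not_aeq_padd hE hw hD hDf he hadd⟩

lemma aeq_foldr_psiE (hA : GoodA E d w A) (hE : ∀ e, e ∈ E ↔ drev e ∈ E)
    (hw : ∀ e ∈ E, 0 ≤ w e) (E' : Finset (V × V)) {l : List (V × V)} (hl : ∀ e ∈ l, e ∈ E)
    (hD : D ⊆ E) (hDf : AdmitsFlow E D d) :
    l.foldr (psiE E d A E') D ⊆ E ∧ AEq E d A D (l.foldr (psiE E d A E') D) := by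
  induction l with
  | nil => exact ⟨hD, hDf, hDf, rfl⟩
  | cons e t ih =>
    obtain ⟨htE, htA⟩ := ih fun e' he' => hl e' (List.mem_cons_of_mem e he')
    obtain ⟨hsE, hsA⟩ := hA.aeq_psiE hE hw E' (hl e List.mem_cons_self) htE htA.2.1
    exact ⟨hsE, htA.trans hsA⟩

end GoodA

theorem psi_maps_orientations_to_subgraphs_general
    {V : Type*} [Fintype V] [DecidableEq V]
    (E : Finset (V × V)) (hE_symm : ∀ e, e ∈ E ↔ drev e ∈ E)
    (d : V → ℤ)
    (w : V × V → ℝ) (hw : ∀ e ∈ E, 0 < w e)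
    (A : Finset (V × V) → Finset (V × V)) (hA : GoodA E d w A)
    (E' : Finset (V × V)) (hE' : IsOrientation E E')
    (l : List (V × V)) (hl_nd : l.Nodup) (hl : l.toFinset = E')
    (L : Finset (V × V)) (hL : IsOrientation E L) (hLf : AdmitsFlow E L d) :
    IsSubgraph E (l.foldr (fun e D => psiE E d A E' e D) L) ∧
    AdmitsFlow E (l.foldr (fun e D => psiE E d A E' e D) L) d ∧
    A (l.foldr (fun e D => psiE E d A E' e D) L) = A L := by
  have hlE' : ∀ e ∈ l, e ∈ E' := fun e he => hl ▸ List.mem_toFinset.2 he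
  have hmem : ∀ x ∈ E, x ∈ l ∨ drev x ∈ l := by
    intro x hx
    simp only [← List.mem_toFinset, hl]
    by_cases hxE' : x ∈ E'
    · exact Or.inl hxE'
    · exact Or.inr (not_not.1 (mt (hE'.2 x hx).2 hxE'))
  obtain ⟨hsub, -, hflow, hAL⟩ :=
    hA.aeq_foldr_psiE hE_symm (fun e he => (hw e he).le) E' (fun e he => hE'.1 (hlE' e he))
      hL.1 hLf
  have hpair := mem_foldr_iff_drev_mem (psiE E d A E') (psiE_eq_padd_or_psub E d A E') L
    (hE'.pairwise hl_nd hlE')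
  refine ⟨⟨hsub, fun x hx => ?_⟩, hflow, hAL.symm⟩
  rcases hmem x hx with hx | hx
  · exact hpair x hx
  · simpa using (hpair _ hx).symm

theorem psi_maps_orientations_to_subgraphs
    {V : Type*} [Fintype V] [DecidableEq V]
    (E : Finset (V × V)) (hE_symm : ∀ e, e ∈ E ↔ drev e ∈ E)
    (hE_ne : ∀ e ∈ E, e.1 ≠ e.2)
    (d : V → ℤ) (hd : ∑ u : V, d u = 0)
    (w : V × V → ℝ) (hw : ∀ e ∈ E, 0 < w e)
    (A : Finset (V × V) → Finset (V × V)) (hA : GoodA E d w A)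
    (E' : Finset (V × V)) (hE' : IsOrientation E E')
    (l : List (V × V)) (hl_nd : l.Nodup) (hl : l.toFinset = E')
    (L : Finset (V × V)) (hL : IsOrientation E L) (hLf : AdmitsFlow E L d) :
    IsSubgraph E (l.foldr (fun e D => psiE E d A E' e D) L) ∧
    AdmitsFlow E (l.foldr (fun e D => psiE E d A E' e D) L) d ∧
    A (l.foldr (fun e D => psiE E d A E' e D) L) = A L :=
  psi_maps_orientations_to_subgraphs_general E hE_symm d w hw A hA E' hE' l hl_nd hl L hL hLf
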